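/- arXiv:math-ph/0604021 — 2 statements merged into one kernel-verified Lean document; each statement's English description precedes it below -/
import Mathlib

section
/- Let u : Ω → ℝ be a C³ solution of the transport equation ∂u/∂t = u·∂u/∂x on an open set Ω ⊆ ℝ² with ∂u/∂x ≠ 0 on Ω. Then the function J(t,x) = −u_xx(t,x)/u_x(t,x)³ satisfies ∂J/∂t = u·∂J/∂x on Ω. -/
/-- Partial derivative in `t` of a function `u : ℝ → ℝ → ℝ`, `u = u t x`. -/
noncomputable def ptderiv (u : ℝ → ℝ → ℝ) : ℝ → ℝ → ℝ :=
  fun t x => deriv (fun s => u s x) t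

/-- Partial derivative in `x` of a function `u : ℝ → ℝ → ℝ`, `u = u t x`. -/
noncomputable def pxderiv (u : ℝ → ℝ → ℝ) : ℝ → ℝ → ℝ :=
  fun t x => deriv (fun y => u t y) x

/-!
Write `v = u_x` and `w = u_xx`. Differentiating `u_t = u u_x` in `x` and exchanging the mixed
partials of the `C³` function `u` gives `v_t = u v_x + v²`, and once more `w_t = u w_x + 3 v w`.
So `v` and `w` are relative invariants of weights `v` and `3 v`, and the quotient `w / v³`
is annihilated by `∂_t - u ∂_x`.
-/

open Function Filter Topology

section Partials

variable {u : ℝ → ℝ → ℝ} {t x : ℝ}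

theorem HasFDerivAt.hasDerivAt_slice_fst {L : ℝ × ℝ →L[ℝ] ℝ}
    (h : HasFDerivAt (uncurry u) L (t, x)) : HasDerivAt (fun s => u s x) (L (1, 0)) t :=
  h.comp_hasDerivAt (f := fun s => (s, x)) t ((hasDerivAt_id' t).prodMk (hasDerivAt_const t x))

theorem HasFDerivAt.hasDerivAt_slice_snd {L : ℝ × ℝ →L[ℝ] ℝ}
    (h : HasFDerivAt (uncurry u) L (t, x)) : HasDerivAt (u t) (L (0, 1)) x :=
  h.comp_hasDerivAt x ((hasDerivAt_const x t).prodMk (hasDerivAt_id' x))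

theorem ptderiv_eq_fderiv (h : DifferentiableAt ℝ (uncurry u) (t, x)) :
    ptderiv u t x = fderiv ℝ (uncurry u) (t, x) (1, 0) :=
  h.hasFDerivAt.hasDerivAt_slice_fst.deriv

theorem pxderiv_eq_fderiv (h : DifferentiableAt ℝ (uncurry u) (t, x)) :
    pxderiv u t x = fderiv ℝ (uncurry u) (t, x) (0, 1) :=
  h.hasFDerivAt.hasDerivAt_slice_snd.deriv

theorem ptderiv_pxderiv_eq_fderiv_fderiv (hu : ContDiffAt ℝ 2 (uncurry u) (t, x)) :
    ptderiv (pxderiv u) t x = fderiv ℝ (fderiv ℝ (uncurry u)) (t, x) (1, 0) (0, 1) := by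
  have hu' : DifferentiableAt ℝ (fderiv ℝ (uncurry u)) (t, x) :=
    (hu.fderiv_right (m := 1) le_rfl).differentiableAt one_ne_zero
  have hpx : uncurry (pxderiv u) =ᶠ[𝓝 (t, x)] fun r => fderiv ℝ (uncurry u) r (0, 1) :=
    (hu.eventually (by simp)).mono fun r hr => pxderiv_eq_fderiv (hr.differentiableAt two_ne_zero)
  have hpx' := (hu'.clm_apply (differentiableAt_const (0, 1))).congr_of_eventuallyEq hpx
  rw [ptderiv_eq_fderiv hpx', hpx.fderiv_eq, fderiv_clm_apply hu' (differentiableAt_const _)]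
  simp

theorem pxderiv_ptderiv_eq_fderiv_fderiv (hu : ContDiffAt ℝ 2 (uncurry u) (t, x)) :
    pxderiv (ptderiv u) t x = fderiv ℝ (fderiv ℝ (uncurry u)) (t, x) (0, 1) (1, 0) := by
  have hu' : DifferentiableAt ℝ (fderiv ℝ (uncurry u)) (t, x) :=
    (hu.fderiv_right (m := 1) le_rfl).differentiableAt one_ne_zero
  have hpt : uncurry (ptderiv u) =ᶠ[𝓝 (t, x)] fun r => fderiv ℝ (uncurry u) r (1, 0) :=
    (hu.eventually (by simp)).mono fun r hr => ptderiv_eq_fderiv (hr.differentiableAt two_ne_zero)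
  have hpt' := (hu'.clm_apply (differentiableAt_const (1, 0))).congr_of_eventuallyEq hpt
  rw [pxderiv_eq_fderiv hpt', hpt.fderiv_eq, fderiv_clm_apply hu' (differentiableAt_const _)]
  simp

theorem ptderiv_pxderiv_comm (hu : ContDiffAt ℝ 2 (uncurry u) (t, x)) :
    ptderiv (pxderiv u) t x = pxderiv (ptderiv u) t x := by
  rw [ptderiv_pxderiv_eq_fderiv_fderiv hu, pxderiv_ptderiv_eq_fderiv_fderiv hu,
    hu.isSymmSndFDerivAt (by simp)]

variable {Ω : Set (ℝ × ℝ)} {n m : WithTop ℕ∞}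

theorem ContDiffOn.differentiableAt_slice_fst (hΩ : IsOpen Ω)
    (hu : ContDiffOn ℝ n (uncurry u) Ω) (hn : n ≠ 0) (hq : (t, x) ∈ Ω) :
    DifferentiableAt ℝ (fun s => u s x) t :=
  ((hu.contDiffAt (hΩ.mem_nhds hq)).differentiableAt hn).hasFDerivAt.hasDerivAt_slice_fst
    |>.differentiableAt

theorem ContDiffOn.differentiableAt_slice_snd (hΩ : IsOpen Ω)
    (hu : ContDiffOn ℝ n (uncurry u) Ω) (hn : n ≠ 0) (hq : (t, x) ∈ Ω) :
    DifferentiableAt ℝ (u t) x :=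
  ((hu.contDiffAt (hΩ.mem_nhds hq)).differentiableAt hn).hasFDerivAt.hasDerivAt_slice_snd
    |>.differentiableAt

theorem ContDiffOn.uncurry_pxderiv (hΩ : IsOpen Ω) (hu : ContDiffOn ℝ m (uncurry u) Ω)
    (hnm : n + 1 ≤ m) : ContDiffOn ℝ n (uncurry (pxderiv u)) Ω := by
  refine ((hu.fderiv_of_isOpen hΩ hnm).clm_apply
    (contDiffOn_const (c := ((0 : ℝ), (1 : ℝ))))).congr fun q hq => ?_
  exact pxderiv_eq_fderiv
    ((hu.differentiableOn (by rintro rfl; simp at hnm)).differentiableAt (hΩ.mem_nhds hq))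

end Partials

section Transport

variable {u : ℝ → ℝ → ℝ} {Ω : Set (ℝ × ℝ)} {t x : ℝ}

theorem ptderiv_pxderiv_of_transport {f g : ℝ → ℝ → ℝ} (hΩ : IsOpen Ω)
    (hf : ContDiffOn ℝ 2 (uncurry f) Ω)
    (hu : ∀ t x, (t, x) ∈ Ω → DifferentiableAt ℝ (u t) x)
    (hg : ∀ t x, (t, x) ∈ Ω → DifferentiableAt ℝ (g t) x)
    (heq : ∀ t x, (t, x) ∈ Ω → ptderiv f t x = u t x * pxderiv f t x + g t x)
    (hq : (t, x) ∈ Ω) :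
    ptderiv (pxderiv f) t x =
      u t x * pxderiv (pxderiv f) t x + pxderiv u t x * pxderiv f t x + pxderiv g t x := by
  have hslice : ∀ᶠ y in 𝓝 x, (t, y) ∈ Ω :=
    (continuous_const.prodMk continuous_id).continuousAt.preimage_mem_nhds (hΩ.mem_nhds hq)
  have hfx : HasDerivAt (pxderiv f t) (pxderiv (pxderiv f) t x) x :=
    (hf.uncurry_pxderiv (n := 1) hΩ (by norm_num)).differentiableAt_slice_snd hΩ one_ne_zero hq
      |>.hasDerivAt
  have hux : HasDerivAt (u t) (pxderiv u t x) x := (hu t x hq).hasDerivAt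
  have hgx : HasDerivAt (g t) (pxderiv g t x) x := (hg t x hq).hasDerivAt
  have hloc : ptderiv f t =ᶠ[𝓝 x] fun y => u t y * pxderiv f t y + g t y :=
    hslice.mono fun y hy => heq t y hy
  rw [ptderiv_pxderiv_comm (hf.contDiffAt (hΩ.mem_nhds hq)), show pxderiv (ptderiv f) t x = _ from
    ((hux.fun_mul hfx).fun_add hgx).congr_of_eventuallyEq hloc |>.deriv]
  ring

theorem ptderiv_neg_div_cube_of_transport {v w : ℝ → ℝ → ℝ} {c : ℝ} (hv0 : v t x ≠ 0)
    (hvt : DifferentiableAt ℝ (fun s => v s x) t) (hvx : DifferentiableAt ℝ (v t) x)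
    (hwt : DifferentiableAt ℝ (fun s => w s x) t) (hwx : DifferentiableAt ℝ (w t) x)
    (hv : ptderiv v t x = u t x * pxderiv v t x + c * v t x)
    (hw : ptderiv w t x = u t x * pxderiv w t x + 3 * c * w t x) :
    ptderiv (fun t x => -w t x / v t x ^ 3) t x =
      u t x * pxderiv (fun t x => -w t x / v t x ^ 3) t x := by
  have ht := hwt.hasDerivAt.fun_neg.fun_div (hvt.hasDerivAt.fun_pow 3) (pow_ne_zero 3 hv0)
  have hx := hwx.hasDerivAt.fun_neg.fun_div (hvx.hasDerivAt.fun_pow 3) (pow_ne_zero 3 hv0)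
  simp only [ptderiv, pxderiv] at hv hw ⊢
  rw [ht.deriv, hx.deriv, hv, hw]
  field_simp
  ring

end Transport

/-- Along any C³ solution of the transport equation `u_t = u u_x` with `u_x ≠ 0`,
the differential function `J = -u_xx/u_x³` is an invariant: `∂J/∂t = u ∂J/∂x`. -/
theorem stmt10 (u : ℝ → ℝ → ℝ) (Ω : Set (ℝ × ℝ)) (hΩ : IsOpen Ω)
    (hu : ContDiffOn ℝ 3 (Function.uncurry u) Ω)
    (hux : ∀ t x : ℝ, (t, x) ∈ Ω → pxderiv u t x ≠ 0)
    (heq : ∀ t x : ℝ, (t, x) ∈ Ω → ptderiv u t x = u t x * pxderiv u t x) :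
    let J : ℝ → ℝ → ℝ := fun t x => -(pxderiv (pxderiv u) t x) / (pxderiv u t x) ^ 3
    ∀ t x : ℝ, (t, x) ∈ Ω → ptderiv J t x = u t x * pxderiv J t x := by
  intro J t x hq
  have hv : ContDiffOn ℝ 2 (uncurry (pxderiv u)) Ω := hu.uncurry_pxderiv hΩ (by norm_num)
  have hw : ContDiffOn ℝ 1 (uncurry (pxderiv (pxderiv u))) Ω :=
    hv.uncurry_pxderiv hΩ (by norm_num)
  have hu_x : ∀ t x, (t, x) ∈ Ω → DifferentiableAt ℝ (u t) x :=
    fun t x hq => hu.differentiableAt_slice_snd hΩ three_ne_zero hq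
  have hv_x : ∀ t x, (t, x) ∈ Ω → DifferentiableAt ℝ (pxderiv u t) x :=
    fun t x hq => hv.differentiableAt_slice_snd hΩ two_ne_zero hq
  have hv_eq : ∀ t x, (t, x) ∈ Ω → ptderiv (pxderiv u) t x =
      u t x * pxderiv (pxderiv u) t x + pxderiv u t x * pxderiv u t x := fun t x hq => by
    simpa [pxderiv] using ptderiv_pxderiv_of_transport (g := fun _ _ => 0) hΩ
      (hu.of_le (by norm_num)) hu_x (fun _ _ _ => differentiableAt_const 0)
      (by simpa using heq) hq
  have hv_x' : HasDerivAt (pxderiv u t) (pxderiv (pxderiv u) t x) x := (hv_x t x hq).hasDerivAt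
  have hw_eq : ptderiv (pxderiv (pxderiv u)) t x = u t x * pxderiv (pxderiv (pxderiv u)) t x +
      3 * pxderiv u t x * pxderiv (pxderiv u) t x := by
    rw [ptderiv_pxderiv_of_transport (g := fun t x => pxderiv u t x * pxderiv u t x) hΩ hv hu_x
      (fun t x hq => (hv_x t x hq).fun_mul (hv_x t x hq)) hv_eq hq,
      show pxderiv (fun t x => pxderiv u t x * pxderiv u t x) t x = _ from
        (hv_x'.fun_mul hv_x').deriv]
    ring
  exact ptderiv_neg_div_cube_of_transport (hux t x hq)
    (hv.differentiableAt_slice_fst hΩ two_ne_zero hq) (hv_x t x hq)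
    (hw.differentiableAt_slice_fst hΩ one_ne_zero hq)
    (hw.differentiableAt_slice_snd hΩ one_ne_zero hq) (hv_eq t x hq) hw_eq
end

section
/- Let A, B, C be real constants. Define, on the open set Ω = {(t,x) ∈ ℝ² : s > 0} where s = t² + t − x, the functions u₀(t,x) = 2√s − 2t − 1 and u₁(t,x) = (1/4)·s^{−2} + (−2At + B) + (At² − Bt + C)·s^{−1/2} + A·s^{1/2}. Then ∂u₀/∂t = u₀·∂u₀/∂x and ∂u₁/∂t = u₀·∂u₁/∂x + u₁·∂u₀/∂x + ∂³u₀/∂x³ at every point of Ω; that is, u = u₀ + ε u₁ solves the KdV equation u_t = u u_x + ε u_xxx up to terms of order ε². -/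
/-!
`u₀` and `u₁` are functions of `t` and `s = t² + t - x`, with `∂ₜ s = 2t + 1` and `∂ₓ s = -1`.
All powers of `s` that occur are half-integers, so once they are written as powers of `r = √s`,
both equations become identities between rational functions of `t` and `r`.
-/

open Real Set

lemma rpow_eq_inv_sqrt_pow {s p : ℝ} (hs : 0 < s) (k : ℕ) (hk : p = -(k / 2)) :
    s ^ p = (√s ^ k)⁻¹ := by
  rw [hk, rpow_neg hs.le, sqrt_eq_rpow, ← rpow_natCast, ← rpow_mul hs.le]
  ring_nf

lemma hasDerivAt_sub_rpow {a y : ℝ} (p : ℝ) (hy : y < a) :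
    HasDerivAt (fun z => (a - z) ^ p) (-(p * (a - y) ^ (p - 1))) y := by
  simpa using ((hasDerivAt_id y).const_sub a).rpow_const (p := p) (Or.inl (sub_pos.2 hy).ne')

/-- The `+ 0` keeps the result in the shape of the hypothesis, so that the lemma can be iterated. -/
lemma eqOn_deriv_of_eqOn_sub_rpow {f : ℝ → ℝ} {a c d p : ℝ}
    (hf : EqOn f (fun y => c * (a - y) ^ p + d) (Iio a)) :
    EqOn (deriv f) (fun y => -(c * p) * (a - y) ^ (p - 1) + 0) (Iio a) := by
  intro y hy
  rw [hf.deriv isOpen_Iio hy, (((hasDerivAt_sub_rpow p hy).const_mul c).add_const d).deriv]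
  ring

lemma hasDerivAt_sq_add_self_sub_rpow {t x : ℝ} (p : ℝ) (hs : 0 < t ^ 2 + t - x) :
    HasDerivAt (fun τ => (τ ^ 2 + τ - x) ^ p)
      ((2 * t + 1) * p * (t ^ 2 + t - x) ^ (p - 1)) t := by
  have hq : HasDerivAt (fun τ => τ ^ 2 + τ - x) (2 * t + 1) t := by
    simpa using ((hasDerivAt_pow 2 t).add (hasDerivAt_id t)).sub_const x
  exact hq.rpow_const (Or.inl hs.ne')

noncomputable def kdvLeading : ℝ → ℝ → ℝ := fun t x => 2 * √(t ^ 2 + t - x) - 2 * t - 1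

noncomputable def kdvCorrection (A B C : ℝ) : ℝ → ℝ → ℝ := fun t x =>
  1 / 4 * (t ^ 2 + t - x) ^ (-2 : ℝ) + (-2 * A * t + B)
    + (A * t ^ 2 - B * t + C) * (t ^ 2 + t - x) ^ (-(1 / 2) : ℝ)
    + A * (t ^ 2 + t - x) ^ ((1 / 2) : ℝ)

variable {t x : ℝ}

lemma ptderiv_kdvLeading (hs : 0 < t ^ 2 + t - x) :
    ptderiv kdvLeading t x = (2 * t + 1) / √(t ^ 2 + t - x) - 2 := by
  have h : HasDerivAt (fun τ => 2 * (τ ^ 2 + τ - x) ^ (1 / 2 : ℝ) - 2 * τ - 1) _ t :=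
    (((hasDerivAt_sq_add_self_sub_rpow (1 / 2) hs).const_mul 2).sub
      ((hasDerivAt_id' t).const_mul 2)).sub_const 1
  simp only [ptderiv, kdvLeading, sqrt_eq_rpow]
  rw [h.deriv, rpow_eq_inv_sqrt_pow hs 1 (by norm_num), ← sqrt_eq_rpow]
  field_simp

lemma kdvLeading_eqOn (t : ℝ) :
    EqOn (kdvLeading t) (fun y => 2 * (t ^ 2 + t - y) ^ (1 / 2 : ℝ) + (-2 * t - 1))
      (Iio (t ^ 2 + t)) := by
  intro y _
  simp only [kdvLeading, sqrt_eq_rpow]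
  ring

lemma pxderiv_kdvLeading (hx : x < t ^ 2 + t) :
    pxderiv kdvLeading t x = -1 / √(t ^ 2 + t - x) := by
  have hs : 0 < t ^ 2 + t - x := sub_pos.2 hx
  change deriv (kdvLeading t) x = _
  rw [eqOn_deriv_of_eqOn_sub_rpow (kdvLeading_eqOn t) hx]
  beta_reduce
  rw [rpow_eq_inv_sqrt_pow hs 1 (by norm_num)]
  field_simp
  ring

lemma pxderiv_pxderiv_pxderiv_kdvLeading (hx : x < t ^ 2 + t) :
    pxderiv (pxderiv (pxderiv kdvLeading)) t x = -(3 / 4) / √(t ^ 2 + t - x) ^ 5 := by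
  have hs : 0 < t ^ 2 + t - x := sub_pos.2 hx
  change deriv (deriv (deriv (kdvLeading t))) x = _
  rw [eqOn_deriv_of_eqOn_sub_rpow (eqOn_deriv_of_eqOn_sub_rpow
    (eqOn_deriv_of_eqOn_sub_rpow (kdvLeading_eqOn t))) hx]
  beta_reduce
  rw [rpow_eq_inv_sqrt_pow hs 5 (by norm_num)]
  field_simp
  ring

lemma ptderiv_kdvCorrection (A B C : ℝ) (hs : 0 < t ^ 2 + t - x) :
    ptderiv (kdvCorrection A B C) t x
      = -(1 / 2) * (2 * t + 1) / √(t ^ 2 + t - x) ^ 6 - 2 * A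
        + (2 * A * t - B) / √(t ^ 2 + t - x)
        - (A * t ^ 2 - B * t + C) * (2 * t + 1) / (2 * √(t ^ 2 + t - x) ^ 3)
        + A * (2 * t + 1) / (2 * √(t ^ 2 + t - x)) := by
  have hP : HasDerivAt (fun τ => A * τ ^ 2 - B * τ + C) (2 * A * t - B) t := by
    simpa [mul_comm, mul_left_comm] using
      (((hasDerivAt_pow 2 t).const_mul A).sub ((hasDerivAt_id t).const_mul B)).add_const C
  have h : HasDerivAt (fun τ => kdvCorrection A B C τ x) _ t :=
    ((((hasDerivAt_sq_add_self_sub_rpow (-2) hs).const_mul (1 / 4)).add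
      (((hasDerivAt_id' t).const_mul (-2 * A)).add_const B)).add
      (hP.mul (hasDerivAt_sq_add_self_sub_rpow (-(1 / 2)) hs))).add
      ((hasDerivAt_sq_add_self_sub_rpow (1 / 2) hs).const_mul A)
  rw [ptderiv, h.deriv, rpow_eq_inv_sqrt_pow hs 6 (by norm_num),
    rpow_eq_inv_sqrt_pow hs 1 (by norm_num), rpow_eq_inv_sqrt_pow hs 3 (by norm_num),
    rpow_eq_inv_sqrt_pow hs 1 (by norm_num)]
  have hr : √(t ^ 2 + t - x) ≠ 0 := (sqrt_pos.2 hs).ne'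
  generalize √(t ^ 2 + t - x) = r at hr ⊢
  field_simp
  ring

lemma pxderiv_kdvCorrection (A B C : ℝ) (hx : x < t ^ 2 + t) :
    pxderiv (kdvCorrection A B C) t x
      = 1 / (2 * √(t ^ 2 + t - x) ^ 6)
        + (A * t ^ 2 - B * t + C) / (2 * √(t ^ 2 + t - x) ^ 3)
        - A / (2 * √(t ^ 2 + t - x)) := by
  have hs : 0 < t ^ 2 + t - x := sub_pos.2 hx
  have h : HasDerivAt (kdvCorrection A B C t) _ x :=
    ((((hasDerivAt_sub_rpow (-2) hx).const_mul (1 / 4)).add_const (-2 * A * t + B)).add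
      ((hasDerivAt_sub_rpow (-(1 / 2)) hx).const_mul (A * t ^ 2 - B * t + C))).add
      ((hasDerivAt_sub_rpow (1 / 2) hx).const_mul A)
  rw [pxderiv, h.deriv, rpow_eq_inv_sqrt_pow hs 6 (by norm_num),
    rpow_eq_inv_sqrt_pow hs 3 (by norm_num), rpow_eq_inv_sqrt_pow hs 1 (by norm_num)]
  have hr : √(t ^ 2 + t - x) ≠ 0 := (sqrt_pos.2 hs).ne'
  generalize √(t ^ 2 + t - x) = r at hr ⊢
  field_simp
  ring

lemma kdvCorrection_apply (A B C : ℝ) (hs : 0 < t ^ 2 + t - x) :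
    kdvCorrection A B C t x
      = 1 / (4 * √(t ^ 2 + t - x) ^ 4) + (-2 * A * t + B)
        + (A * t ^ 2 - B * t + C) / √(t ^ 2 + t - x) + A * √(t ^ 2 + t - x) := by
  rw [kdvCorrection, rpow_eq_inv_sqrt_pow hs 4 (by norm_num),
    rpow_eq_inv_sqrt_pow hs 1 (by norm_num), ← sqrt_eq_rpow]
  ring

lemma ptderiv_kdvLeading_eq_mul_pxderiv (hs : 0 < t ^ 2 + t - x) :
    ptderiv kdvLeading t x = kdvLeading t x * pxderiv kdvLeading t x := by
  have hr : √(t ^ 2 + t - x) ≠ 0 := (sqrt_pos.2 hs).ne'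
  rw [ptderiv_kdvLeading hs, pxderiv_kdvLeading (sub_pos.1 hs), kdvLeading]
  generalize √(t ^ 2 + t - x) = r at hr ⊢
  field_simp
  ring

lemma ptderiv_kdvCorrection_eq_linearized (A B C : ℝ) (hs : 0 < t ^ 2 + t - x) :
    ptderiv (kdvCorrection A B C) t x
      = kdvLeading t x * pxderiv (kdvCorrection A B C) t x
        + kdvCorrection A B C t x * pxderiv kdvLeading t x
        + pxderiv (pxderiv (pxderiv kdvLeading)) t x := by
  have hx : x < t ^ 2 + t := sub_pos.1 hs
  have hr : √(t ^ 2 + t - x) ≠ 0 := (sqrt_pos.2 hs).ne'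
  rw [ptderiv_kdvCorrection A B C hs, pxderiv_kdvCorrection A B C hx,
    kdvCorrection_apply A B C hs, pxderiv_kdvLeading hx, pxderiv_pxderiv_pxderiv_kdvLeading hx,
    kdvLeading]
  generalize √(t ^ 2 + t - x) = r at hr ⊢
  field_simp
  ring

/-- With `s = t² + t - x`, the pair `u₀ = 2√s - 2t - 1`,
`u₁ = (1/4) s⁻² + (-2At + B) + (At² - Bt + C) s^{-1/2} + A s^{1/2}`
solves the KdV equation `u_t = u u_x + ε u_xxx` up to terms of order `ε²` on `{s > 0}`:
`∂u₀/∂t = u₀ ∂u₀/∂x` and `∂u₁/∂t = u₀ ∂u₁/∂x + u₁ ∂u₀/∂x + ∂³u₀/∂x³`. -/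
theorem stmt18 (A B C : ℝ) :
    let u₀ : ℝ → ℝ → ℝ := fun t x => 2 * Real.sqrt (t ^ 2 + t - x) - 2 * t - 1
    let u₁ : ℝ → ℝ → ℝ := fun t x =>
      1 / 4 * (t ^ 2 + t - x) ^ (-2 : ℝ) + (-2 * A * t + B)
        + (A * t ^ 2 - B * t + C) * (t ^ 2 + t - x) ^ (-(1 / 2) : ℝ)
        + A * (t ^ 2 + t - x) ^ ((1 / 2) : ℝ)
    ∀ t x : ℝ, t ^ 2 + t - x > 0 →
      ptderiv u₀ t x = u₀ t x * pxderiv u₀ t x ∧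
      ptderiv u₁ t x
        = u₀ t x * pxderiv u₁ t x + u₁ t x * pxderiv u₀ t x
          + pxderiv (pxderiv (pxderiv u₀)) t x := by
  intro u₀ u₁ t x hs
  exact ⟨ptderiv_kdvLeading_eq_mul_pxderiv hs, ptderiv_kdvCorrection_eq_linearized A B C hs⟩
end
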